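/- arXiv:2304.11601 — 3 statements merged into one kernel-verified Lean document; each statement's English description precedes it below -/
import Mathlib

section
/- If [x_1, ..., x_n] and [y_1, ..., y_n] are two lists of real numbers that are not permutations of each other but satisfy ∑ x_i^j = ∑ y_i^j for j = 1, ..., m, then n ≥ m + 1. -/
/-!
Equal power sums of orders `1, …, n` force equal elementary symmetric functions of orders
`≤ n` (Newton's identities, dividing by `k` in characteristic zero). Two multisets of size `n`
with the same elementary symmetric functions are the root multisets of the same monic polynomial,
hence equal, and equal multisets of values differ by a permutation of the indices.
-/

open Finset

theorem Fintype.exists_perm_apply_eq_of_map_univ_eq {α β : Type*} [Fintype α] {f g : α → β}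
    (h : univ.val.map f = univ.val.map g) : ∃ σ : Equiv.Perm α, ∀ a, f (σ a) = g a := by
  classical
  have hfiber (b : β) : Fintype.card {a // g a = b} = Fintype.card {a // f a = b} := by
    simpa [Multiset.count_map, Fintype.card_subtype, ← Finset.filter_val, eq_comm] using
      (congrArg (Multiset.count b) h).symm
  exact ⟨Equiv.ofFiberEquiv fun b => Fintype.equivOfCardEq (hfiber b), Equiv.ofFiberEquiv_map _⟩

open MvPolynomial in
theorem Multiset.esymm_map_univ_eq_of_sum_pow_eq {σ R : Type*} [Fintype σ] [CommRing R]
    [IsDomain R] [CharZero R] {x y : σ → R} {N : ℕ}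
    (h : ∀ j ∈ Icc 1 N, ∑ i, x i ^ j = ∑ i, y i ^ j) {k : ℕ} (hk : k ≤ N) :
    (univ.val.map x).esymm k = (univ.val.map y).esymm k := by
  rw [← aeval_esymm_eq_multiset_esymm σ R, ← aeval_esymm_eq_multiset_esymm σ R]
  induction k using Nat.strong_induction_on with
  | _ k ih =>
  rcases k.eq_zero_or_pos with rfl | hk0
  · simp
  have hx := congrArg (aeval x) (mul_esymm_eq_sum σ R k)
  have hy := congrArg (aeval y) (mul_esymm_eq_sum σ R k)
  simp only [map_mul, map_pow, map_neg, map_one, map_natCast, map_sum] at hx hy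
  refine mul_left_cancel₀ (Nat.cast_ne_zero.mpr hk0.ne' : (k : R) ≠ 0) ?_
  rw [hx, hy]
  congr 1
  refine sum_congr rfl fun a ha => ?_
  rw [Finset.mem_filter, HasAntidiagonal.mem_antidiagonal] at ha
  simp only [psum, map_sum, map_pow, aeval_X, ih a.1 ha.2 (by omega),
    h a.2 (mem_Icc.mpr ⟨by omega, by omega⟩)]

open Polynomial in
theorem Multiset.eq_of_card_eq_of_esymm_eq {R : Type*} [CommRing R] [IsDomain R]
    {s t : Multiset R} (hcard : card s = card t) (h : ∀ k ≤ card s, s.esymm k = t.esymm k) :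
    s = t := by
  have hprod : (s.map fun r => X - C r).prod = (t.map fun r => X - C r).prod := by
    rw [prod_X_sub_X_eq_sum_esymm, prod_X_sub_X_eq_sum_esymm, ← hcard]
    exact sum_congr rfl fun k hk => by rw [h k (Nat.lt_succ_iff.mp (mem_range.mp hk))]
  simpa only [roots_multiset_prod_X_sub_C] using congrArg roots hprod

/-- If two lists of `n` real numbers are not permutations of each other but have equal
power sums of orders `1, …, m`, then `n ≥ m + 1`. -/
theorem pte_size_lower_bound (n m : ℕ) (x y : Fin n → ℝ)
    (hne : ¬ ∃ σ : Equiv.Perm (Fin n), ∀ i, x (σ i) = y i)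
    (hpow : ∀ j ∈ Finset.Icc 1 m, (∑ i, x i ^ j) = ∑ i, y i ^ j) :
    n ≥ m + 1 := by
  by_contra! hnm
  have hpow_n : ∀ j ∈ Icc 1 n, ∑ i, x i ^ j = ∑ i, y i ^ j :=
    fun j hj => hpow j (Icc_subset_Icc_right (by omega) hj)
  refine hne (Fintype.exists_perm_apply_eq_of_map_univ_eq ?_)
  refine Multiset.eq_of_card_eq_of_esymm_eq (by simp) fun k hk => ?_
  exact Multiset.esymm_map_univ_eq_of_sum_pow_eq hpow_n (by simpa using hk)
end

section
/- Two multisets of n complex numbers with equal power sums of orders 1 through n are equal. -/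
/-! Newton's identities express `k * e_k` through `e_0, …, e_{k-1}` and the power sums
`p_1, …, p_k`; in characteristic zero one can divide by `k`, so the power sums of orders
`1, …, n` determine `e_0, …, e_n`. These are the coefficients of `∏ (X - a)`, whose roots
recover the multiset. -/

open Finset MvPolynomial

namespace Multiset

variable {R : Type*} [CommRing R]

theorem mul_esymm_eq_sum (s : Multiset R) (k : ℕ) :
    (k : R) * s.esymm k = (-1) ^ (k + 1) *
      ∑ a ∈ HasAntidiagonal.antidiagonal k with a.1 < k,
        (-1) ^ a.1 * s.esymm a.1 * (s.map (· ^ a.2)).sum := by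
  classical
  have hs : (univ : Finset s).val.map (fun x : s => (x : R)) = s := map_univ_coe s
  have key := congrArg (aeval fun x : s => (x : R)) (MvPolynomial.mul_esymm_eq_sum s R k)
  have h_esymm (j : ℕ) :
      aeval (fun x : s => (x : R)) (MvPolynomial.esymm s R j) = s.esymm j := by
    rw [aeval_esymm_eq_multiset_esymm, hs]
  have h_psum (j : ℕ) : aeval (fun x : s => (x : R)) (psum s R j) = (s.map (· ^ j)).sum := by
    simp only [psum, map_sum, map_pow, aeval_X]
    conv_rhs => rw [← hs, map_map]
    rfl
  simpa only [map_mul, map_sum, map_pow, map_neg, map_one, map_natCast, h_esymm, h_psum]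
    using key

variable [IsDomain R]

theorem eq_of_card_eq_of_esymm_eq_s2 {s t : Multiset R} (hcard : card s = card t)
    (h : ∀ k ≤ card s, s.esymm k = t.esymm k) : s = t := by
  have h_prod : (s.map fun a => Polynomial.X - Polynomial.C a).prod =
      (t.map fun a => Polynomial.X - Polynomial.C a).prod := by
    rw [prod_X_sub_X_eq_sum_esymm, prod_X_sub_X_eq_sum_esymm, ← hcard]
    exact sum_congr rfl fun j hj => by rw [h j (Nat.lt_succ_iff.mp (mem_range.mp hj))]
  simpa only [Polynomial.roots_multiset_prod_X_sub_C] using congrArg Polynomial.roots h_prod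

variable [CharZero R]

theorem esymm_eq_of_sum_map_pow_eq {s t : Multiset R} {n : ℕ}
    (h : ∀ j ∈ Icc 1 n, (s.map (· ^ j)).sum = (t.map (· ^ j)).sum) :
    ∀ k ≤ n, s.esymm k = t.esymm k := by
  intro k
  induction k using Nat.strong_induction_on with
  | _ k ih =>
    intro hkn
    rcases Nat.eq_zero_or_pos k with rfl | hk
    · simp [esymm]
    have h_sum : ∑ a ∈ HasAntidiagonal.antidiagonal k with a.1 < k,
          (-1 : R) ^ a.1 * s.esymm a.1 * (s.map (· ^ a.2)).sum =
        ∑ a ∈ HasAntidiagonal.antidiagonal k with a.1 < k,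
          (-1) ^ a.1 * t.esymm a.1 * (t.map (· ^ a.2)).sum := by
      refine sum_congr rfl fun a ha => ?_
      obtain ⟨hak, ha_lt⟩ := Finset.mem_filter.mp ha
      rw [HasAntidiagonal.mem_antidiagonal] at hak
      rw [ih a.1 ha_lt (by omega), h a.2 (mem_Icc.mpr ⟨by omega, by omega⟩)]
    refine mul_left_cancel₀ (Nat.cast_ne_zero.mpr hk.ne') ?_
    rw [mul_esymm_eq_sum, mul_esymm_eq_sum, h_sum]

end Multiset

/-- Two multisets of `n` complex numbers with equal power sums of orders `1` through `n`
are equal. -/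
theorem multiset_eq_of_powerSums_eq (n : ℕ) (S T : Multiset ℂ)
    (hS : Multiset.card S = n) (hT : Multiset.card T = n)
    (hpow : ∀ j ∈ Finset.Icc 1 n, (S.map (fun z => z ^ j)).sum = (T.map (fun z => z ^ j)).sum) :
    S = T :=
  Multiset.eq_of_card_eq_of_esymm_eq_s2 (hS.trans hT.symm)
    (hS ▸ Multiset.esymm_eq_of_sum_map_pow_eq hpow)
end

section
/- Let V be a real inner product space, and let δ, Λ_i, Λ_j be vectors such that Λ_i + Λ_j + 2δ lies in a cone P (nonnegative rational combinations of fundamental weights) and Λ_i − Λ_j lies in the cone Q of nonnegative integer combinations of positive roots or its negative, where (p, q) ≥ 0 for all p ∈ P, q ∈ Q, with equality only if q = 0. If (Λ_i, Λ_i + 2δ) = (Λ_j, Λ_j + 2δ) then Λ_i = Λ_j. -/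
open RealInnerProductSpace

/-- Abstract form of Proposition 2.5: if `Λᵢ + Λⱼ + 2δ` lies in a cone `P`, and
`Λᵢ - Λⱼ` or its negative lies in a cone `Q`, where every element of `P` pairs
nonnegatively with every element of `Q` with equality only for `q = 0`, then equality
of Casimir eigenvalues `(Λᵢ, Λᵢ + 2δ) = (Λⱼ, Λⱼ + 2δ)` forces `Λᵢ = Λⱼ`. -/
theorem casimir_eigenvalues_distinct {V : Type*} [NormedAddCommGroup V]
    [InnerProductSpace ℝ V] (P Q : Set V) (δ ΛI ΛJ : V)
    (hPQ : ∀ p ∈ P, ∀ q ∈ Q, 0 ≤ ⟪p, q⟫ ∧ (⟪p, q⟫ = 0 → q = 0))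
    (hP : ΛI + ΛJ + 2 • δ ∈ P)
    (hQ : ΛI - ΛJ ∈ Q ∨ -(ΛI - ΛJ) ∈ Q)
    (heq : ⟪ΛI, ΛI + 2 • δ⟫ = ⟪ΛJ, ΛJ + 2 • δ⟫) :
    ΛI = ΛJ := by
  have key : ⟪ΛI + ΛJ + 2 • δ, ΛI - ΛJ⟫ = 0 := by
    simp only [two_smul, inner_add_left, inner_sub_right, inner_add_right] at *
    have h1 := real_inner_comm ΛI ΛJ
    have h2 := real_inner_comm δ ΛI
    have h3 := real_inner_comm δ ΛJ
    linarith
  rcases hQ with hq | hq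
  · have := (hPQ _ hP _ hq).2 key
    exact sub_eq_zero.mp this
  · have : ⟪ΛI + ΛJ + 2 • δ, -(ΛI - ΛJ)⟫ = 0 := by
      rw [inner_neg_right, key, neg_zero]
    have := (hPQ _ hP _ hq).2 this
    have : ΛJ - ΛI = 0 := by simpa [neg_sub] using this
    exact (sub_eq_zero.mp this).symm
end
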